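/- arXiv:2509.15749 — 2 statements merged into one kernel-verified Lean document; each statement's English description precedes it below -/
import Mathlib

section
/- Let S, T be n×n complex Hermitian matrices with 0 ≤ S ≤ 1 and 0 ≤ T ≤ 1, and define the 2n×2n block matrices P_S := [[S, (S(1−S))^{1/2}], [(S(1−S))^{1/2}, 1−S]] and similarly P_T. Then P_S and P_T are orthogonal projections and η(P_S, P_T)² = 2·η(S,T)². -/
set_option linter.unusedSectionVars false


open scoped Classical ComplexOrder Matrix

/-- The positive semidefinite square root of a positive semidefinite matrix
(junk value `0` if the matrix is not positive semidefinite). -/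
noncomputable def msqrt {n : Type*} [Fintype n] [DecidableEq n]
    (A : Matrix n n ℂ) : Matrix n n ℂ :=
  if h : A.PosSemidef then
    (h.1.eigenvectorUnitary : Matrix n n ℂ) * Matrix.diagonal ((↑) ∘ (√·) ∘ h.1.eigenvalues) *
      (star h.1.eigenvectorUnitary : Matrix n n ℂ)
  else 0

/-- The Hilbert-Schmidt (Frobenius) norm of a matrix. -/
noncomputable def frob {n : Type*} [Fintype n]
    (M : Matrix n n ℂ) : ℝ :=
  Real.sqrt (∑ i, ∑ j, ‖M i j‖ ^ 2)

/-- `η(A,B) = ‖√(1−A)·√B − √A·√(1−B)‖₂`. -/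
noncomputable def eta {n : Type*} [Fintype n] [DecidableEq n]
    (A B : Matrix n n ℂ) : ℝ :=
  frob (msqrt (1 - A) * msqrt B - msqrt A * msqrt (1 - B))

/-- The purifying projection `P_S = [[S, √S√(1−S)], [√S√(1−S), 1−S]]`. -/
noncomputable def covProj {n : ℕ} (S : Matrix (Fin n) (Fin n) ℂ) :
    Matrix (Fin n ⊕ Fin n) (Fin n ⊕ Fin n) ℂ :=
  Matrix.fromBlocks S (msqrt S * msqrt (1 - S)) (msqrt S * msqrt (1 - S)) (1 - S)

section helpers

open scoped MatrixOrder

variable {m : Type*} [Fintype m] [DecidableEq m]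

lemma msqrt_of_psd {A : Matrix m m ℂ} (hA : A.PosSemidef) : msqrt A = CFC.sqrt A := by
  rw [CFC.sqrt_eq_real_sqrt A hA.nonneg, cfcₙ_eq_cfc, hA.1.cfc_eq]
  simp [msqrt, hA, Matrix.IsHermitian.cfc, Unitary.conjStarAlgAut_apply, Function.comp_def]

lemma msqrt_mul_self {A : Matrix m m ℂ} (hA : A.PosSemidef) : msqrt A * msqrt A = A := by
  rw [msqrt_of_psd hA]; exact CFC.sqrt_mul_sqrt_self A hA.nonneg

lemma msqrt_herm {A : Matrix m m ℂ} (hA : A.PosSemidef) : (msqrt A)ᴴ = msqrt A := by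
  rw [msqrt_of_psd hA]; exact (Matrix.nonneg_iff_posSemidef.mp (CFC.sqrt_nonneg A)).1

lemma msqrt_comm {A : Matrix m m ℂ} (hA : A.PosSemidef) (hA1 : (1 - A).PosSemidef) :
    msqrt A * msqrt (1 - A) = msqrt (1 - A) * msqrt A := by
  rw [msqrt_of_psd hA, msqrt_of_psd hA1]
  have e1 : CFC.sqrt A = cfc Real.sqrt A := by
    rw [CFC.sqrt_eq_real_sqrt A hA.nonneg, cfcₙ_eq_cfc]
  have e2 : CFC.sqrt (1 - A) = cfc Real.sqrt (1 - A) := by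
    rw [CFC.sqrt_eq_real_sqrt (1 - A) hA1.nonneg, cfcₙ_eq_cfc]
  have hsa : IsSelfAdjoint A := hA.1
  have e3 : (1 - A) = cfc (fun x : ℝ => 1 - x) A := by
    rw [cfc_sub _ _ A (by fun_prop) (by fun_prop), cfc_const_one ℝ A, cfc_id' ℝ A]
  have e4 : cfc Real.sqrt (1 - A) = cfc (fun x => Real.sqrt (1 - x)) A := by
    rw [e3, ← cfc_comp Real.sqrt (fun x : ℝ => 1 - x) A hsa (by fun_prop) (by fun_prop)]
    rfl
  rw [e1, e2, e4]
  exact (cfc_commute_cfc _ _ A).eq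

end helpers

section ringlemmas

variable {R : Type*} [Ring R] {a b : R}

lemma mul_comm_sq (hc : a * b = b * a) : a * b * (a * b) = a * a * (b * b) := by
  calc a * b * (a * b) = a * (b * a) * b := by noncomm_ring
  _ = a * (a * b) * b := by rw [← hc]
  _ = a * a * (b * b) := by noncomm_ring

lemma blkTL (hc : a * b = b * a) (h1 : a * a + b * b = 1) : a * a * (a * a) + a * b * (a * b) = a * a := by
  have hab := mul_comm_sq hc
  calc a * a * (a * a) + a * b * (a * b) = a * a * (a * a + b * b) := by rw [hab]; noncomm_ring
  _ = a * a := by rw [h1, mul_one]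

lemma blkTR (h1 : a * a + b * b = 1) : a * a * (a * b) + a * b * (b * b) = a * b := by
  calc a * a * (a * b) + a * b * (b * b) = a * (a * a + b * b) * b := by noncomm_ring
  _ = a * b := by rw [h1, mul_one]

lemma blkBL (hc : a * b = b * a) (h1 : a * a + b * b = 1) : a * b * (a * a) + b * b * (a * b) = a * b := by
  have h2 : a * b * (a * a) = a * a * (a * b) := by
    calc a * b * (a * a) = a * (b * a) * a := by noncomm_ring
    _ = a * (a * b) * a := by rw [← hc]
    _ = a * a * (b * a) := by noncomm_ring
    _ = a * a * (a * b) := by rw [← hc]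
  have h3 : b * b * (a * b) = a * b * (b * b) := by
    calc b * b * (a * b) = b * (b * a) * b := by noncomm_ring
    _ = b * (a * b) * b := by rw [hc]
    _ = (b * a) * (b * b) := by noncomm_ring
    _ = a * b * (b * b) := by rw [hc]
  rw [h2, h3]; exact blkTR h1

lemma blkBR (hc : a * b = b * a) (h1 : a * a + b * b = 1) : a * b * (a * b) + b * b * (b * b) = b * b := by
  have hab := mul_comm_sq hc
  calc a * b * (a * b) + b * b * (b * b) = (a * a + b * b) * (b * b) := by rw [hab]; noncomm_ring
  _ = b * b := by rw [h1, one_mul]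

end ringlemmas


section mainhelpers

open scoped MatrixOrder

variable {m : Type*} [Fintype m] [DecidableEq m]

lemma msqrt_of_proj {P : Matrix m m ℂ} (hP : P.PosSemidef) (hPP : P * P = P) :
    msqrt P = P := by
  rw [msqrt_of_psd hP]
  exact CFC.sqrt_unique (a := P) hPP hP.nonneg

omit [DecidableEq m] in
lemma frob_sq (M : Matrix m m ℂ) : frob M ^ 2 = ∑ i, ∑ j, ‖M i j‖ ^ 2 :=
  Real.sq_sqrt (by positivity)

omit [DecidableEq m] in
lemma frobSq_eq_re_trace (M : Matrix m m ℂ) :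
    ∑ i, ∑ j, ‖M i j‖ ^ 2 = (Matrix.trace (Mᴴ * M)).re := by
  have key : ∀ z : ℂ, (star z * z).re = ‖z‖ ^ 2 := by
    intro z
    rw [Complex.star_def, ← Complex.normSq_eq_conj_mul_self]
    simp [Complex.sq_norm, ← Complex.normSq_eq_norm_sq]
  rw [Matrix.trace]
  simp only [Matrix.diag_apply, Matrix.mul_apply, Matrix.conjTranspose_apply]
  rw [Complex.re_sum, Finset.sum_comm]
  refine Finset.sum_congr rfl fun i _ => ?_
  rw [Complex.re_sum]
  exact Finset.sum_congr rfl fun j _ => (key _).symm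

end mainhelpers


section covprojlemmas

lemma covProj_herm {n : ℕ} {S : Matrix (Fin n) (Fin n) ℂ}
    (hS : S.PosSemidef) (hS1 : (1 - S).PosSemidef) : (covProj S)ᴴ = covProj S := by
  have hg : (msqrt S * msqrt (1 - S))ᴴ = msqrt S * msqrt (1 - S) := by
    rw [Matrix.conjTranspose_mul, msqrt_herm hS, msqrt_herm hS1, ← msqrt_comm hS hS1]
  rw [covProj, Matrix.fromBlocks_conjTranspose, hg, hS.1.eq, hS1.1.eq]

lemma covProj_idem {n : ℕ} {S : Matrix (Fin n) (Fin n) ℂ}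
    (hS : S.PosSemidef) (hS1 : (1 - S).PosSemidef) : covProj S * covProj S = covProj S := by
  rw [covProj, Matrix.fromBlocks_multiply]
  set a := msqrt S with ha_def
  set a' := msqrt (1 - S) with ha'_def
  have ha : a * a = S := msqrt_mul_self hS
  have ha' : a' * a' = 1 - S := msqrt_mul_self hS1
  have hc : a * a' = a' * a := msqrt_comm hS hS1
  have h1 : a * a + a' * a' = 1 := by rw [ha, ha']; abel
  rw [← ha', ← ha]
  rw [Matrix.fromBlocks_inj]
  exact ⟨blkTL hc h1, blkTR h1, blkBL hc h1, blkBR hc h1⟩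

end covprojlemmas


section projlemmas

variable {m : Type*} [Fintype m] [DecidableEq m]

lemma proj_psd {P : Matrix m m ℂ} (hH : Pᴴ = P) (hPP : P * P = P) : P.PosSemidef := by
  have h := Matrix.posSemidef_conjTranspose_mul_self P
  rwa [hH, hPP] at h

lemma one_sub_proj_herm {P : Matrix m m ℂ} (hH : Pᴴ = P) : (1 - P)ᴴ = 1 - P := by
  rw [Matrix.conjTranspose_sub, Matrix.conjTranspose_one, hH]

lemma one_sub_proj_idem {P : Matrix m m ℂ} (hPP : P * P = P) :
    (1 - P) * (1 - P) = 1 - P := by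
  have h : (1 - P) * (1 - P) = 1 - P - P + P * P := by noncomm_ring
  rw [h, hPP]; abel

lemma eta_proj {P Q : Matrix m m ℂ} (hPH : Pᴴ = P) (hPP : P * P = P)
    (hQH : Qᴴ = Q) (hQP : Q * Q = Q) : eta P Q = frob (Q - P) := by
  rw [eta, msqrt_of_proj (proj_psd hPH hPP) hPP,
    msqrt_of_proj (proj_psd hQH hQP) hQP,
    msqrt_of_proj (proj_psd (one_sub_proj_herm hPH) (one_sub_proj_idem hPP))
      (one_sub_proj_idem hPP),
    msqrt_of_proj (proj_psd (one_sub_proj_herm hQH) (one_sub_proj_idem hQP))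
      (one_sub_proj_idem hQP)]
  congr 1
  noncomm_ring

omit [DecidableEq m] in
lemma frobSq_fromBlocks (A B C D : Matrix m m ℂ) :
    ∑ i, ∑ j, ‖Matrix.fromBlocks A B C D i j‖ ^ 2 =
      ((∑ i, ∑ j, ‖A i j‖ ^ 2) + (∑ i, ∑ j, ‖B i j‖ ^ 2)) +
      ((∑ i, ∑ j, ‖C i j‖ ^ 2) + (∑ i, ∑ j, ‖D i j‖ ^ 2)) := by
  rw [Fintype.sum_sum_type]
  congr 1 <;> rw [← Finset.sum_add_distrib] <;>
    exact Finset.sum_congr rfl fun i _ => by rw [Fintype.sum_sum_type]; rfl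

end projlemmas


lemma fromBlocks_sub' {m : Type*} (A B C D A' B' C' D' : Matrix m m ℂ) :
    Matrix.fromBlocks A B C D - Matrix.fromBlocks A' B' C' D' =
      Matrix.fromBlocks (A - A') (B - B') (C - C') (D - D') := by
  simp only [sub_eq_add_neg, Matrix.fromBlocks_neg, Matrix.fromBlocks_add]

theorem eta_purification {n : ℕ}
    (S T : Matrix (Fin n) (Fin n) ℂ)
    (hS : S.PosSemidef) (hS1 : (1 - S).PosSemidef)
    (hT : T.PosSemidef) (hT1 : (1 - T).PosSemidef) :
    (covProj S)ᴴ = covProj S ∧ covProj S * covProj S = covProj S ∧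
      (covProj T)ᴴ = covProj T ∧ covProj T * covProj T = covProj T ∧
      eta (covProj S) (covProj T) ^ 2 = 2 * eta S T ^ 2 := by
  have hPSH := covProj_herm hS hS1
  have hPSP := covProj_idem hS hS1
  have hPTH := covProj_herm hT hT1
  have hPTP := covProj_idem hT hT1
  refine ⟨hPSH, hPSP, hPTH, hPTP, ?_⟩
  have ha : msqrt S * msqrt S = S := msqrt_mul_self hS
  have ha' : msqrt (1 - S) * msqrt (1 - S) = 1 - S := msqrt_mul_self hS1
  have hb : msqrt T * msqrt T = T := msqrt_mul_self hT
  have hb' : msqrt (1 - T) * msqrt (1 - T) = 1 - T := msqrt_mul_self hT1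
  have hcS : msqrt S * msqrt (1 - S) = msqrt (1 - S) * msqrt S := msqrt_comm hS hS1
  have hcT : msqrt T * msqrt (1 - T) = msqrt (1 - T) * msqrt T := msqrt_comm hT hT1
  have hblock : covProj T - covProj S =
      Matrix.fromBlocks (T - S) (msqrt T * msqrt (1 - T) - msqrt S * msqrt (1 - S))
        (msqrt T * msqrt (1 - T) - msqrt S * msqrt (1 - S)) (S - T) := by
    rw [covProj, covProj, fromBlocks_sub']
    rw [Matrix.fromBlocks_inj]
    exact ⟨rfl, rfl, rfl, by abel⟩
  rw [eta_proj hPSH hPSP hPTH hPTP, hblock, eta, frob_sq, frob_sq, frobSq_fromBlocks]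
  set a := msqrt S with ha_def
  set b := msqrt T with hb_def
  set a' := msqrt (1 - S) with ha'_def
  set b' := msqrt (1 - T) with hb'_def
  have hTS : ∑ i, ∑ j, ‖(T - S) i j‖ ^ 2 = ∑ i, ∑ j, ‖(S - T) i j‖ ^ 2 := by
    simp [Matrix.sub_apply, norm_sub_rev]
  have keyC : Matrix.trace ((S - T) * (S - T)) +
      Matrix.trace ((b * b' - a * a') * (b * b' - a * a')) =
      Matrix.trace ((b * a' - b' * a) * (a' * b - a * b')) := by
    simp only [Matrix.sub_mul, Matrix.mul_sub, Matrix.trace_sub]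
    have m1 : (T * S).trace = (S * T).trace := Matrix.trace_mul_comm T S
    have m2 : (a * a' * (a * a')).trace = S.trace - (S * S).trace := by
      rw [mul_comm_sq hcS, ha, ha', Matrix.mul_sub, mul_one, Matrix.trace_sub]
    have m3 : (b * b' * (b * b')).trace = T.trace - (T * T).trace := by
      rw [mul_comm_sq hcT, hb, hb', Matrix.mul_sub, mul_one, Matrix.trace_sub]
    have m4 : (b * b' * (a * a')).trace = (a * a' * (b * b')).trace :=
      Matrix.trace_mul_comm _ _
    have m5 : (b * a' * (a' * b)).trace = T.trace - (S * T).trace := by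
      have h : b * a' * (a' * b) = b * (a' * a' * b) := by noncomm_ring
      rw [h, ha', Matrix.trace_mul_comm, mul_assoc, hb, Matrix.sub_mul, one_mul,
        Matrix.trace_sub]
    have m6 : (b * a' * (a * b')).trace = (a * a' * (b * b')).trace := by
      have h : b * a' * (a * b') = b * (a' * a * b') := by noncomm_ring
      rw [h, ← hcS, Matrix.trace_mul_comm, mul_assoc, ← hcT, ← mul_assoc]
    have m7 : (b' * a * (a' * b)).trace = (a * a' * (b * b')).trace := by
      have h : b' * a * (a' * b) = b' * (a * a' * b) := by noncomm_ring
      rw [h, Matrix.trace_mul_comm, mul_assoc, ← mul_assoc]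
    have m8 : (b' * a * (a * b')).trace = S.trace - (S * T).trace := by
      have h : b' * a * (a * b') = b' * (a * a * b') := by noncomm_ring
      rw [h, ha, Matrix.trace_mul_comm, mul_assoc, hb', Matrix.mul_sub, mul_one,
        Matrix.trace_sub]
    rw [m1, m2, m3, m4, m5, m6, m7, m8]
    ring
  have hd1 : (S - T)ᴴ = S - T := by
    rw [Matrix.conjTranspose_sub, hS.1.eq, hT.1.eq]
  have hd2 : (b * b' - a * a')ᴴ = b * b' - a * a' := by
    rw [Matrix.conjTranspose_sub, Matrix.conjTranspose_mul, Matrix.conjTranspose_mul,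
      msqrt_herm hS, msqrt_herm hS1, msqrt_herm hT, msqrt_herm hT1, ← hcS, ← hcT]
  have hd3 : (a' * b - a * b')ᴴ = b * a' - b' * a := by
    rw [Matrix.conjTranspose_sub, Matrix.conjTranspose_mul, Matrix.conjTranspose_mul,
      msqrt_herm hS, msqrt_herm hS1, msqrt_herm hT, msqrt_herm hT1]
  have key : (∑ i, ∑ j, ‖(S - T) i j‖ ^ 2) +
      (∑ i, ∑ j, ‖(b * b' - a * a') i j‖ ^ 2) =
      ∑ i, ∑ j, ‖(a' * b - a * b') i j‖ ^ 2 := by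
    rw [frobSq_eq_re_trace, frobSq_eq_re_trace, frobSq_eq_re_trace, hd1, hd2, hd3,
      ← Complex.add_re, keyC]
  linarith [key, hTS]
end

section
/- Let F, G be d×d complex Hermitian matrices and K an m×m complex Hermitian matrix. Then for every unitary (d+m)×(d+m) matrix u, ‖u·(F ⊕ K)·u† − (G ⊕ K)‖₁ ≥ inf_{v} ‖v·F·v† − G‖₁, where the infimum runs over all unitary d×d matrices v and F ⊕ K denotes the block-diagonal (direct sum) matrix. -/
open scoped Classical ComplexOrder Matrix

/-- The trace norm `‖M‖₁ = tr √(M†M)` of a matrix. -/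
noncomputable def traceNorm {n : Type*} [Fintype n] [DecidableEq n]
    (M : Matrix n n ℂ) : ℝ :=
  (msqrt (Mᴴ * M)).trace.re

set_option linter.unusedSectionVars false

open scoped ComplexConjugate

namespace TDSOAux

open Finset Matrix Polynomial


open Finset

/-- counting function: number of elements of `s` greater than `x`. -/
noncomputable def cnt (s : Multiset ℝ) (x : ℝ) : ℕ := Multiset.countP (fun y => x < y) s

/-- multiset of values of a tuple. -/
noncomputable def tms {N : ℕ} (f : Fin N → ℝ) : Multiset ℝ := Finset.univ.val.map f

lemma tms_card {N : ℕ} (f : Fin N → ℝ) : Multiset.card (tms f) = N := by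
  simp [tms]

lemma tms_sum {N : ℕ} (f : Fin N → ℝ) : (tms f).sum = ∑ i, f i := rfl

lemma cnt_add (s t : Multiset ℝ) (x : ℝ) : cnt (s + t) x = cnt s x + cnt t x :=
  Multiset.countP_add _ _ _

lemma cnt_tms {N : ℕ} (f : Fin N → ℝ) (x : ℝ) :
    cnt (tms f) x = (univ.filter fun i => x < f i).card := by
  rw [cnt, tms, Multiset.countP_map, Finset.card, Finset.filter_val]

lemma upcl_total {N : ℕ} {S T : Finset (Fin N)}
    (hS : ∀ ⦃i j : Fin N⦄, i ≤ j → i ∈ S → j ∈ S)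
    (hT : ∀ ⦃i j : Fin N⦄, i ≤ j → i ∈ T → j ∈ T) : S ⊆ T ∨ T ⊆ S := by
  by_contra h
  push_neg at h
  obtain ⟨s, hsS, hsT⟩ := Finset.not_subset.mp h.1
  obtain ⟨t, htT, htS⟩ := Finset.not_subset.mp h.2
  rcases le_total s t with hle | hle
  · exact htS (hS hle hsS)
  · exact hsT (hT hle htT)

lemma cnt_tms_max {N : ℕ} {f g : Fin N → ℝ} (hf : Monotone f) (hg : Monotone g) (x : ℝ) :
    cnt (tms fun i => max (f i) (g i)) x = max (cnt (tms f) x) (cnt (tms g) x) := by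
  rw [cnt_tms, cnt_tms, cnt_tms]
  have hunion : (univ.filter fun i => x < max (f i) (g i))
      = (univ.filter fun i => x < f i) ∪ (univ.filter fun i => x < g i) := by
    ext i
    simp [lt_max_iff]
  have hupf : ∀ ⦃i j : Fin N⦄, i ≤ j → i ∈ (univ.filter fun i => x < f i) →
      j ∈ (univ.filter fun i => x < f i) := by
    intro i j hij hi
    simp only [Finset.mem_filter, Finset.mem_univ, true_and] at hi ⊢
    exact hi.trans_le (hf hij)
  have hupg : ∀ ⦃i j : Fin N⦄, i ≤ j → i ∈ (univ.filter fun i => x < g i) →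
      j ∈ (univ.filter fun i => x < g i) := by
    intro i j hij hi
    simp only [Finset.mem_filter, Finset.mem_univ, true_and] at hi ⊢
    exact hi.trans_le (hg hij)
  rw [hunion]
  rcases upcl_total hupf hupg with h | h
  · rw [Finset.union_eq_right.mpr h, max_eq_right (Finset.card_le_card h)]
  · rw [Finset.union_eq_left.mpr h, max_eq_left (Finset.card_le_card h)]

lemma monotone_eq_of_cnt : ∀ {N : ℕ} {f g : Fin N → ℝ}, Monotone f → Monotone g →
    (∀ x, cnt (tms f) x = cnt (tms g) x) → f = g := by
  intro N
  induction N with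
  | zero => intro f g _ _ _; funext i; exact i.elim0
  | succ n ih =>
    intro f g hf hg hcnt
    have hpos : ∀ (h : Fin (n + 1) → ℝ), Monotone h →
        ∀ x, (x < h (Fin.last n) ↔ 0 < cnt (tms h) x) := by
      intro h hmono x
      constructor
      · intro hx
        refine Multiset.countP_pos.mpr ⟨h (Fin.last n), ?_, hx⟩
        exact Multiset.mem_map.mpr ⟨Fin.last n, Finset.mem_univ_val _, rfl⟩
      · intro hx
        obtain ⟨a, ha, hxa⟩ := Multiset.countP_pos.mp hx
        obtain ⟨i, _, rfl⟩ := Multiset.mem_map.mp ha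
        exact hxa.trans_le (hmono (Fin.le_last i))
    have hlast : f (Fin.last n) = g (Fin.last n) := by
      have hiff : ∀ x, x < f (Fin.last n) ↔ x < g (Fin.last n) := fun x => by
        rw [hpos f hf x, hpos g hg x, hcnt x]
      refine le_antisymm (le_of_forall_lt fun c hc => (hiff c).mp hc)
        (le_of_forall_lt fun c hc => (hiff c).mpr hc)
    have hsplit : ∀ (h : Fin (n + 1) → ℝ) (x : ℝ), cnt (tms h) x
        = cnt (tms (h ∘ Fin.castSucc)) x + (if x < h (Fin.last n) then 1 else 0) := by
      intro h x
      rw [cnt_tms, cnt_tms, Finset.card_filter, Finset.card_filter, Fin.sum_univ_castSucc]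
      rfl
    have hmc : Monotone (Fin.castSucc : Fin n → Fin (n + 1)) := by
      intro a b hab
      simpa using hab
    have htail : f ∘ Fin.castSucc = g ∘ Fin.castSucc := by
      refine ih (hf.comp hmc) (hg.comp hmc) fun x => ?_
      have h1 := hsplit f x
      have h2 := hsplit g x
      rw [hcnt x, hlast] at h1
      omega
    funext i
    induction i using Fin.lastCases with
    | last => exact hlast
    | cast j => exact congrFun htail j

noncomputable def ofMs {N : ℕ} (s : Multiset ℝ) (h : Multiset.card s = N) : Fin N → ℝ :=
  fun i => (s.sort (· ≤ ·)).get (Fin.cast (by rw [Multiset.length_sort, h]) i)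

lemma monotone_ofMs {N : ℕ} (s : Multiset ℝ) (h : Multiset.card s = N) :
    Monotone (ofMs s h) := by
  intro a b hab
  refine (Multiset.pairwise_sort s (· ≤ ·)).rel_get_of_le ?_
  rw [Fin.le_def, Fin.coe_cast, Fin.coe_cast]
  exact hab

lemma tms_ofMs {N : ℕ} (s : Multiset ℝ) (h : Multiset.card s = N) :
    tms (ofMs s h) = s := by
  have hl : List.ofFn (ofMs s h) = s.sort (· ≤ ·) := by
    apply List.ext_get (by rw [List.length_ofFn, Multiset.length_sort, h])
    intro i h1 h2
    rw [List.get_ofFn]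
    rfl
  rw [tms, Fin.univ_val_map, hl]
  exact Multiset.sort_eq _ _

lemma abs_sub_eq (x y : ℝ) : |x - y| = 2 * max x y - x - y := by
  rcases le_total x y with h | h
  · rw [abs_of_nonpos (by linarith), max_eq_right h]; ring
  · rw [abs_of_nonneg (by linarith), max_eq_left h]; ring

lemma merge_eq {d' m' N : ℕ} {a b : Fin d' → ℝ} {c : Fin m' → ℝ} {a' b' : Fin N → ℝ}
    (ha : Monotone a) (hb : Monotone b) (ha' : Monotone a') (hb' : Monotone b')
    (hma : tms a' = tms a + tms c) (hmb : tms b' = tms b + tms c) :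
    ∑ k, |a' k - b' k| = ∑ k, |a k - b k| := by
  have hcard : Multiset.card (tms (fun i => max (a i) (b i)) + tms c) = N := by
    have h1 := congrArg Multiset.card hma
    simp only [Multiset.card_add, tms_card] at h1 ⊢
    omega
  have hHmax : (fun k => max (a' k) (b' k)) = ofMs (tms (fun i => max (a i) (b i)) + tms c) hcard := by
    refine monotone_eq_of_cnt (fun i j h => max_le_max (ha' h) (hb' h))
      (monotone_ofMs _ _) fun x => ?_
    rw [cnt_tms_max ha' hb' x, tms_ofMs, hma, hmb, cnt_add, cnt_add, cnt_add,
      cnt_tms_max ha hb x, max_add_add_right]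
  have hsum_max : ∑ k, max (a' k) (b' k) = (∑ i, max (a i) (b i)) + ∑ j, c j := by
    calc ∑ k, max (a' k) (b' k) = (tms fun k => max (a' k) (b' k)).sum := (tms_sum _).symm
      _ = (tms (fun i => max (a i) (b i)) + tms c).sum := by rw [hHmax, tms_ofMs]
      _ = (∑ i, max (a i) (b i)) + ∑ j, c j := by rw [Multiset.sum_add, tms_sum, tms_sum]
  have hsa : ∑ k, a' k = (∑ i, a i) + ∑ j, c j := by
    have := congrArg Multiset.sum hma
    rwa [tms_sum, Multiset.sum_add, tms_sum, tms_sum] at this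
  have hsb : ∑ k, b' k = (∑ i, b i) + ∑ j, c j := by
    have := congrArg Multiset.sum hmb
    rwa [tms_sum, Multiset.sum_add, tms_sum, tms_sum] at this
  calc ∑ k, |a' k - b' k| = ∑ k, (2 * max (a' k) (b' k) - a' k - b' k) := by
        simp_rw [abs_sub_eq]
    _ = 2 * (∑ k, max (a' k) (b' k)) - (∑ k, a' k) - ∑ k, b' k := by
        rw [Finset.sum_sub_distrib, Finset.sum_sub_distrib, Finset.mul_sum]
    _ = 2 * ((∑ i, max (a i) (b i)) + ∑ j, c j) - ((∑ i, a i) + ∑ j, c j)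
        - ((∑ i, b i) + ∑ j, c j) := by rw [hsum_max, hsa, hsb]
    _ = 2 * (∑ i, max (a i) (b i)) - (∑ i, a i) - ∑ i, b i := by ring
    _ = ∑ k, (2 * max (a k) (b k) - a k - b k) := by
        rw [Finset.sum_sub_distrib, Finset.sum_sub_distrib, Finset.mul_sum]
    _ = ∑ k, |a k - b k| := by simp_rw [abs_sub_eq]


variable {n : Type*} [Fintype n] [DecidableEq n]

/-- eigenvalue multiset of a Hermitian matrix -/
noncomputable def evs {A : Matrix n n ℂ} (hA : A.IsHermitian) : Multiset ℝ :=
  Finset.univ.val.map hA.eigenvalues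

noncomputable def pEquiv {A : Matrix n n ℂ} (hA : A.IsHermitian) : Fin (Fintype.card n) ≃ n :=
  (Tuple.sort (hA.eigenvalues ∘ (Fintype.equivFin n).symm)).trans (Fintype.equivFin n).symm

/-- sorted (ascending) eigenvalue tuple -/
noncomputable def sEig {A : Matrix n n ℂ} (hA : A.IsHermitian) : Fin (Fintype.card n) → ℝ :=
  hA.eigenvalues ∘ pEquiv hA

lemma monotone_sEig {A : Matrix n n ℂ} (hA : A.IsHermitian) : Monotone (sEig hA) :=
  Tuple.monotone_sort (hA.eigenvalues ∘ (Fintype.equivFin n).symm)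

lemma tms_sEig {A : Matrix n n ℂ} (hA : A.IsHermitian) : tms (sEig hA) = evs hA := by
  rw [tms, sEig, ← Multiset.map_map hA.eigenvalues (pEquiv hA)]
  congr 1
  have := congrArg Finset.val (Finset.map_univ_equiv (pEquiv hA))
  rwa [Finset.map_val] at this

lemma sum_sEig {A : Matrix n n ℂ} (hA : A.IsHermitian) :
    ∑ k, sEig hA k = ∑ i, hA.eigenvalues i :=
  Equiv.sum_comp (pEquiv hA) hA.eigenvalues

/-- characteristic polynomial of a conjugation by a unitary -/
lemma charpoly_unitary_conj {u B : Matrix n n ℂ} (hu : u ∈ Matrix.unitaryGroup n ℂ) :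
    (u * B * uᴴ).charpoly = B.charpoly := by
  have h1 : (u * uᴴ) = 1 := by
    simpa [Matrix.star_eq_conjTranspose] using (Matrix.mem_unitaryGroup_iff.mp hu)
  have hm : ∀ M N : Matrix n n ℂ,
      (C : ℂ →+* ℂ[X]).mapMatrix (M * N) = (C : ℂ →+* ℂ[X]).mapMatrix M *
        (C : ℂ →+* ℂ[X]).mapMatrix N := fun M N => by
    simp [RingHom.mapMatrix_apply, Matrix.map_mul]
  have hcm : charmatrix (u * B * uᴴ)
      = (C : ℂ →+* ℂ[X]).mapMatrix u * charmatrix B * (C : ℂ →+* ℂ[X]).mapMatrix uᴴ := by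
    rw [charmatrix, charmatrix, Matrix.mul_sub, Matrix.sub_mul]
    congr 1
    · symm
      rw [Matrix.mul_assoc,
        (Matrix.scalar_commute (X : ℂ[X]) (Commute.all _) ((C : ℂ →+* ℂ[X]).mapMatrix uᴴ)).eq,
        ← Matrix.mul_assoc, ← hm, h1]
      simp
    · rw [hm, hm]
  have h2 : uᴴ * u = 1 := by
    simpa [Matrix.star_eq_conjTranspose] using (Matrix.mem_unitaryGroup_iff'.mp hu)
  rw [Matrix.charpoly, Matrix.charpoly, hcm, Matrix.det_mul, Matrix.det_mul, mul_comm,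
    ← mul_assoc, ← Matrix.det_mul, ← hm, h2]
  simp

lemma charmatrix_diagonal (d : n → ℂ) :
    charmatrix (Matrix.diagonal d) = Matrix.diagonal fun i => (X : ℂ[X]) - C (d i) := by
  ext i j
  by_cases h : i = j
  · subst h; simp
  · simp [Matrix.charmatrix_apply_ne _ _ _ h, Matrix.diagonal_apply_ne _ h]

lemma charpoly_diagonal (d : n → ℂ) :
    (Matrix.diagonal d).charpoly = ∏ i, ((X : ℂ[X]) - C (d i)) := by
  rw [Matrix.charpoly, charmatrix_diagonal, Matrix.det_diagonal]

lemma charpoly_herm {A : Matrix n n ℂ} (hA : A.IsHermitian) :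
    A.charpoly = (Multiset.map (fun r : ℝ => (X : ℂ[X]) - C (r : ℂ)) (evs hA)).prod := by
  have hspec := hA.spectral_theorem
  rw [Unitary.conjStarAlgAut_apply, Matrix.star_eq_conjTranspose] at hspec
  calc A.charpoly = ((hA.eigenvectorUnitary : Matrix n n ℂ) *
        Matrix.diagonal (RCLike.ofReal ∘ hA.eigenvalues) *
        (hA.eigenvectorUnitary : Matrix n n ℂ)ᴴ).charpoly := by rw [← hspec]
    _ = (Matrix.diagonal (RCLike.ofReal ∘ hA.eigenvalues)).charpoly :=
        charpoly_unitary_conj hA.eigenvectorUnitary.prop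
    _ = ∏ i, ((X : ℂ[X]) - C ((hA.eigenvalues i : ℝ) : ℂ)) := charpoly_diagonal _
    _ = _ := by
        rw [evs, Multiset.map_map]
        rfl

lemma map_evs_eq_roots {A : Matrix n n ℂ} (hA : A.IsHermitian) :
    (evs hA).map (fun r : ℝ => (r : ℂ)) = A.charpoly.roots := by
  rw [charpoly_herm hA,
    show (Multiset.map (fun r : ℝ => (X : ℂ[X]) - C (r : ℂ)) (evs hA))
      = Multiset.map (fun z : ℂ => (X : ℂ[X]) - C z) ((evs hA).map fun r : ℝ => (r : ℂ)) by
        rw [Multiset.map_map]; rfl,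
    Polynomial.roots_multiset_prod_X_sub_C]

lemma evs_congr {n₂ : Type*} [Fintype n₂] [DecidableEq n₂] {A : Matrix n n ℂ}
    {B : Matrix n₂ n₂ ℂ} (hA : A.IsHermitian) (hB : B.IsHermitian)
    (h : A.charpoly = B.charpoly) : evs hA = evs hB := by
  apply Multiset.map_injective (f := fun r : ℝ => (r : ℂ)) Complex.ofReal_injective
  rw [map_evs_eq_roots, map_evs_eq_roots, h]

lemma sEig_congr {A B : Matrix n n ℂ} (hA : A.IsHermitian) (hB : B.IsHermitian)
    (h : evs hA = evs hB) : sEig hA = sEig hB := by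
  refine monotone_eq_of_cnt (monotone_sEig hA) (monotone_sEig hB) fun x => ?_
  rw [tms_sEig, tms_sEig, h]


lemma evs_fromBlocks {d' m' : ℕ} {F : Matrix (Fin d') (Fin d') ℂ}
    {K : Matrix (Fin m') (Fin m') ℂ} (hF : F.IsHermitian) (hK : K.IsHermitian)
    (hFK : (Matrix.fromBlocks F 0 0 K).IsHermitian) :
    evs hFK = evs hF + evs hK := by
  apply Multiset.map_injective (f := fun r : ℝ => (r : ℂ)) Complex.ofReal_injective
  rw [Multiset.map_add, map_evs_eq_roots, map_evs_eq_roots, map_evs_eq_roots,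
    Matrix.charpoly_fromBlocks_zero₂₁, Polynomial.roots_mul
      (mul_ne_zero (Matrix.charpoly_monic F).ne_zero (Matrix.charpoly_monic K).ne_zero)]

open scoped MatrixOrder in
lemma msqrt_eq_sqrt {A : Matrix n n ℂ}
    (hA : A.PosSemidef) : msqrt A = CFC.sqrt A := by
  have h0 : (0 : Matrix n n ℂ) ≤ A := Matrix.nonneg_iff_posSemidef.mpr hA
  rw [msqrt, dif_pos hA, CFC.sqrt_eq_real_sqrt A h0, cfcₙ_eq_cfc, Matrix.IsHermitian.cfc_eq hA.1,
    Matrix.IsHermitian.cfc, Unitary.conjStarAlgAut_apply]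
  rfl

open scoped MatrixOrder in
lemma msqrt_eq_of_sq {A S : Matrix n n ℂ}
    (hA : A.PosSemidef) (hS : S.PosSemidef) (h : S ^ 2 = A) : msqrt A = S := by
  rw [msqrt_eq_sqrt hA]
  exact CFC.sqrt_unique (by rw [← h, pow_two]) (Matrix.nonneg_iff_posSemidef.mpr hS)

lemma traceNorm_nonneg (M : Matrix n n ℂ) : 0 ≤ traceNorm M := by
  show (0:ℝ) ≤ (msqrt (Mᴴ * M)).trace.re
  have hP := Matrix.posSemidef_conjTranspose_mul_self M
  rw [msqrt, dif_pos hP, Matrix.trace_mul_cycle, Unitary.coe_star_mul_self, Matrix.one_mul,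
    Matrix.trace_diagonal, Complex.re_sum]
  exact Finset.sum_nonneg fun i _ => by simp [Real.sqrt_nonneg]

lemma traceNorm_unitary_diag {u : Matrix n n ℂ} (hu : u ∈ Matrix.unitaryGroup n ℂ) (d : n → ℝ) :
    traceNorm (u * Matrix.diagonal (fun i => (d i : ℂ)) * uᴴ) = ∑ i, |d i| := by
  have h2 : uᴴ * u = 1 := by
    simpa [Matrix.star_eq_conjTranspose] using (Matrix.mem_unitaryGroup_iff'.mp hu)
  have hconj : ∀ e e' : n → ℂ, (u * Matrix.diagonal e * uᴴ) * (u * Matrix.diagonal e' * uᴴ)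
      = u * Matrix.diagonal (fun i => e i * e' i) * uᴴ := by
    intro e e'
    have h3 : (u * Matrix.diagonal e * uᴴ) * (u * Matrix.diagonal e' * uᴴ)
        = u * (Matrix.diagonal e * Matrix.diagonal e') * uᴴ := by
      simp only [Matrix.mul_assoc]
      rw [← Matrix.mul_assoc uᴴ u, h2, Matrix.one_mul]
    rw [h3, Matrix.diagonal_mul_diagonal]
  set D := Matrix.diagonal (fun i => (d i : ℂ)) with hD
  set M := u * D * uᴴ with hM
  have hDH : Dᴴ = D := by
    rw [hD, Matrix.diagonal_conjTranspose]
    have hst : (star fun i : n => ((d i : ℝ) : ℂ)) = fun i : n => ((d i : ℝ) : ℂ) := by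
      funext i
      rw [Pi.star_apply, Complex.star_def, Complex.conj_ofReal]
    rw [hst]
  have hMH : Mᴴ = M := by
    rw [hM, Matrix.conjTranspose_mul, Matrix.conjTranspose_mul,
      Matrix.conjTranspose_conjTranspose, hDH, Matrix.mul_assoc]
  have hMM : Mᴴ * M = u * Matrix.diagonal (fun i => ((d i : ℂ) * (d i : ℂ))) * uᴴ := by
    rw [hMH, hM, hD, hconj]
  set S := u * Matrix.diagonal (fun i => ((|d i| : ℝ) : ℂ)) * uᴴ with hS
  have hdpos : (0 : n → ℂ) ≤ fun i => ((|d i| : ℝ) : ℂ) := by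
    rw [Pi.le_def]
    intro i
    exact Complex.zero_le_real.mpr (abs_nonneg _)
  have hSpsd : S.PosSemidef :=
    Matrix.PosSemidef.mul_mul_conjTranspose_same (Matrix.PosSemidef.diagonal hdpos) u
  have habs2 : (fun i => ((|d i| : ℝ) : ℂ) * ((|d i| : ℝ) : ℂ))
      = fun i => ((d i : ℝ) : ℂ) * ((d i : ℝ) : ℂ) := by
    funext i
    rw [← Complex.ofReal_mul, ← Complex.ofReal_mul, abs_mul_abs_self]
  have hSsq : S ^ 2 = Mᴴ * M := by
    rw [pow_two, hS, hconj, habs2, hMM]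
  have hpsdMM : (Mᴴ * M).PosSemidef := Matrix.posSemidef_conjTranspose_mul_self M
  have hmsqrt : msqrt (Mᴴ * M) = S := by
    exact msqrt_eq_of_sq hpsdMM hSpsd hSsq
  show (msqrt (Mᴴ * M)).trace.re = ∑ i, |d i|
  rw [hmsqrt, hS, Matrix.trace_mul_cycle, h2, Matrix.one_mul,
    Matrix.trace_diagonal, Complex.re_sum]
  simp

lemma traceNorm_herm {A : Matrix n n ℂ} (hA : A.IsHermitian) :
    traceNorm A = ∑ i, |hA.eigenvalues i| := by
  have hspec := hA.spectral_theorem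
  rw [Unitary.conjStarAlgAut_apply, Matrix.star_eq_conjTranspose] at hspec
  calc traceNorm A = traceNorm ((hA.eigenvectorUnitary : Matrix n n ℂ) *
        Matrix.diagonal (RCLike.ofReal ∘ hA.eigenvalues) *
        (hA.eigenvectorUnitary : Matrix n n ℂ)ᴴ) := by rw [← hspec]
    _ = ∑ i, |hA.eigenvalues i| := traceNorm_unitary_diag hA.eigenvectorUnitary.prop _

lemma sum_eig_eq_trace_re {A : Matrix n n ℂ} (hA : A.IsHermitian) :
    ∑ i, hA.eigenvalues i = A.trace.re := by
  have hspec := hA.spectral_theorem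
  rw [Unitary.conjStarAlgAut_apply, Matrix.star_eq_conjTranspose] at hspec
  have h2 : (hA.eigenvectorUnitary : Matrix n n ℂ)ᴴ * (hA.eigenvectorUnitary : Matrix n n ℂ)
      = 1 := by
    simpa [Matrix.star_eq_conjTranspose] using
      (Matrix.mem_unitaryGroup_iff'.mp hA.eigenvectorUnitary.prop)
  conv_rhs => rw [hspec]
  rw [Matrix.trace_mul_cycle, h2, Matrix.one_mul,
    Matrix.trace_diagonal, Complex.re_sum]
  simp

lemma isHermitian_fromBlocks {d' m' : ℕ} {F : Matrix (Fin d') (Fin d') ℂ}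
    {K : Matrix (Fin m') (Fin m') ℂ} (hF : F.IsHermitian) (hK : K.IsHermitian) :
    (Matrix.fromBlocks F 0 0 K).IsHermitian := by
  show (Matrix.fromBlocks F 0 0 K)ᴴ = _
  rw [Matrix.fromBlocks_conjTranspose, Matrix.conjTranspose_zero, Matrix.conjTranspose_zero,
    hF.eq, hK.eq]

lemma isHermitian_conj {u A : Matrix n n ℂ} (hA : A.IsHermitian) :
    (u * A * uᴴ).IsHermitian := by
  show (u * A * uᴴ)ᴴ = _
  rw [Matrix.conjTranspose_mul, Matrix.conjTranspose_mul, Matrix.conjTranspose_conjTranspose,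
    hA.eq, Matrix.mul_assoc]


lemma quadform_re {A : Matrix n n ℂ} (hA : A.IsHermitian) (x : EuclideanSpace ℂ n) :
    (dotProduct (star (x : n → ℂ)) (A *ᵥ (x : n → ℂ))).re
      = ∑ j, hA.eigenvalues j * ‖hA.eigenvectorBasis.repr x j‖ ^ 2 := by
  set b := hA.eigenvectorBasis with hb
  set c : n → ℂ := fun j => b.repr x j with hc
  have hx : (x : n → ℂ) = ∑ j, c j • (b j : n → ℂ) := by
    have h := congrArg WithLp.ofLp (b.sum_repr x).symm
    rw [h, WithLp.ofLp_sum]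
    simp only [WithLp.ofLp_smul]
    rfl
  have horth : ∀ j k : n, dotProduct (star (b j : n → ℂ)) (b k : n → ℂ)
      = if j = k then 1 else 0 := by
    intro j k
    have h1 : (inner ℂ (b j) (b k) : ℂ) = dotProduct (star (b j : n → ℂ)) (b k : n → ℂ) := by
      rw [EuclideanSpace.inner_eq_star_dotProduct, dotProduct_comm]
    rw [← h1]
    exact orthonormal_iff_ite.mp b.orthonormal j k
  have hrs : ∀ (r : ℝ) (w : n → ℂ), r • w = (r : ℂ) • w := fun r w => by
    funext i
    simp [Complex.real_smul]
  have hsum_dot : ∀ (f : n → n → ℂ) (v : n → ℂ),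
      dotProduct (∑ i, f i) v = ∑ i, dotProduct (f i) v := by
    intro f v
    simp only [dotProduct, Finset.sum_apply, Finset.sum_mul]
    exact Finset.sum_comm
  have hdot_sum : ∀ (v : n → ℂ) (f : n → n → ℂ),
      dotProduct v (∑ i, f i) = ∑ i, dotProduct v (f i) := by
    intro v f
    simp only [dotProduct, Finset.sum_apply, Finset.mul_sum]
    exact Finset.sum_comm
  have hAx : A *ᵥ (x : n → ℂ) = ∑ j, (c j * (hA.eigenvalues j : ℂ)) • (b j : n → ℂ) := by
    rw [hx, ← Matrix.mulVecLin_apply, map_sum]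
    refine Finset.sum_congr rfl fun j _ => ?_
    rw [_root_.map_smul, Matrix.mulVecLin_apply,
      show A *ᵥ (b j : n → ℂ) = hA.eigenvalues j • (b j : n → ℂ) from
        hA.mulVec_eigenvectorBasis j,
      hrs, smul_smul, mul_comm]
  conv_lhs => rw [hAx, hx]
  rw [star_sum, hsum_dot]
  have hterm : ∀ j : n, dotProduct (star (c j • (b j : n → ℂ)))
      (∑ k, (c k * (hA.eigenvalues k : ℂ)) • (b k : n → ℂ))
      = conj (c j) * (c j * (hA.eigenvalues j : ℂ)) := by
    intro j
    rw [hdot_sum, star_smul]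
    rw [Finset.sum_eq_single j]
    · rw [smul_dotProduct, dotProduct_smul, horth j j, if_pos rfl]
      simp [smul_eq_mul]
    · intro k _ hkj
      rw [smul_dotProduct, dotProduct_smul, horth j k,
        if_neg fun h => hkj h.symm]
      simp
    · intro h
      exact absurd (Finset.mem_univ j) h
  simp only [hterm]
  rw [Complex.re_sum]
  refine Finset.sum_congr rfl fun j _ => ?_
  have hcc : conj (c j) * (c j * (hA.eigenvalues j : ℂ))
      = ((‖c j‖ ^ 2 : ℝ) : ℂ) * ((hA.eigenvalues j : ℝ) : ℂ) := by
    rw [← mul_assoc, mul_comm (conj (c j)) (c j), Complex.mul_conj, Complex.normSq_eq_norm_sq]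
  rw [hcc, ← Complex.ofReal_mul, Complex.ofReal_re]
  ring

lemma norm_sq_repr (b : OrthonormalBasis n ℂ (EuclideanSpace ℂ n)) (x : EuclideanSpace ℂ n) :
    ‖x‖ ^ 2 = ∑ j, ‖b.repr x j‖ ^ 2 := by
  rw [← b.repr.norm_map x, EuclideanSpace.norm_eq, Real.sq_sqrt]
  exact Finset.sum_nonneg fun j _ => sq_nonneg _

lemma repr_eq_zero_of_span {b : OrthonormalBasis n ℂ (EuclideanSpace ℂ n)}
    {S : Set n} {x : EuclideanSpace ℂ n}
    (hx : x ∈ Submodule.span ℂ (b '' S)) {j : n} (hj : j ∉ S) :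
    b.repr x j = 0 := by
  have hkey : ∀ y ∈ Submodule.span ℂ (b '' S), (inner ℂ (b j) y : ℂ) = 0 := by
    intro y hy
    induction hy using Submodule.span_induction with
    | mem y hy =>
        obtain ⟨i, hiS, rfl⟩ := hy
        exact b.orthonormal.2 (fun h => hj (h ▸ hiS))
    | zero => simp
    | add y z _ _ hy hz => rw [inner_add_right, hy, hz, add_zero]
    | smul t y _ hy => rw [inner_smul_right, hy, mul_zero]
  rw [b.repr_apply_apply]
  exact hkey x hx

lemma weyl {A B : Matrix n n ℂ} (hA : A.IsHermitian) (hB : B.IsHermitian)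
    (hAB : (B - A).PosSemidef) (k : Fin (Fintype.card n)) : sEig hA k ≤ sEig hB k := by
  set SA : Set n := (pEquiv hA) '' (Set.Ici k) with hSA
  set SB : Set n := (pEquiv hB) '' (Set.Iic k) with hSB
  set V := Submodule.span ℂ (hA.eigenvectorBasis '' SA) with hV
  set W := Submodule.span ℂ (hB.eigenvectorBasis '' SB) with hW
  have hVrank : Module.finrank ℂ V = Fintype.card n - k := by
    rw [hV, Set.image_eq_range]
    have hli : LinearIndependent ℂ (fun i : SA => hA.eigenvectorBasis (i : n)) :=
      hA.eigenvectorBasis.orthonormal.linearIndependent.comp _ Subtype.val_injective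
    rw [finrank_span_eq_card hli]
    rw [show Fintype.card SA = Fintype.card (Set.Ici k) from
      (Fintype.card_congr (Equiv.Set.image _ _ (pEquiv hA).injective)).symm]
    rw [Fintype.card_Ici]; exact Fin.card_Ici k
  have hWrank : Module.finrank ℂ W = (k : ℕ) + 1 := by
    rw [hW, Set.image_eq_range]
    have hli : LinearIndependent ℂ (fun i : SB => hB.eigenvectorBasis (i : n)) :=
      hB.eigenvectorBasis.orthonormal.linearIndependent.comp _ Subtype.val_injective
    rw [finrank_span_eq_card hli]
    rw [show Fintype.card SB = Fintype.card (Set.Iic k) from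
      (Fintype.card_congr (Equiv.Set.image _ _ (pEquiv hB).injective)).symm]
    rw [Fintype.card_Iic]; exact Fin.card_Iic k
  have hsum : Module.finrank ℂ (V ⊔ W : Submodule ℂ (EuclideanSpace ℂ n))
      + Module.finrank ℂ (V ⊓ W : Submodule ℂ (EuclideanSpace ℂ n))
      = (Fintype.card n - k) + ((k : ℕ) + 1) := by
    rw [← hVrank, ← hWrank]
    exact Submodule.finrank_sup_add_finrank_inf_eq V W
  have hsup : Module.finrank ℂ (V ⊔ W : Submodule ℂ (EuclideanSpace ℂ n))
      ≤ Fintype.card n := by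
    have h := Submodule.finrank_le (V ⊔ W)
    rwa [finrank_euclideanSpace] at h
  have hklt : (k : ℕ) < Fintype.card n := k.2
  have hinfpos : 0 < Module.finrank ℂ (V ⊓ W : Submodule ℂ (EuclideanSpace ℂ n)) := by omega
  have hne : (V ⊓ W : Submodule ℂ (EuclideanSpace ℂ n)) ≠ ⊥ := by
    intro h
    rw [h, finrank_bot] at hinfpos
    exact lt_irrefl _ hinfpos
  obtain ⟨x, hxVW, hx0⟩ := Submodule.exists_mem_ne_zero_of_ne_bot hne
  have hxV : x ∈ V := (Submodule.mem_inf.mp hxVW).1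
  have hxW : x ∈ W := (Submodule.mem_inf.mp hxVW).2
  have hxn : (0:ℝ) < ‖x‖ ^ 2 := by
    have := norm_pos_iff.mpr hx0
    positivity
  have hAx : sEig hA k * ‖x‖ ^ 2 ≤ (dotProduct (star (x : n → ℂ)) (A *ᵥ (x : n → ℂ))).re := by
    rw [quadform_re hA x, norm_sq_repr hA.eigenvectorBasis x, Finset.mul_sum]
    refine Finset.sum_le_sum fun j _ => ?_
    rcases eq_or_ne (hA.eigenvectorBasis.repr x j) 0 with h0 | h0
    · simp [h0]
    · have hjS : j ∈ SA := by
        by_contra hj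
        exact h0 (repr_eq_zero_of_span hxV hj)
      obtain ⟨i, hik, rfl⟩ := hjS
      exact mul_le_mul_of_nonneg_right (monotone_sEig hA hik) (sq_nonneg _)
  have hBx : (dotProduct (star (x : n → ℂ)) (B *ᵥ (x : n → ℂ))).re
      ≤ sEig hB k * ‖x‖ ^ 2 := by
    rw [quadform_re hB x, norm_sq_repr hB.eigenvectorBasis x, Finset.mul_sum]
    refine Finset.sum_le_sum fun j _ => ?_
    rcases eq_or_ne (hB.eigenvectorBasis.repr x j) 0 with h0 | h0
    · simp [h0]
    · have hjS : j ∈ SB := by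
        by_contra hj
        exact h0 (repr_eq_zero_of_span hxW hj)
      obtain ⟨i, hik, rfl⟩ := hjS
      exact mul_le_mul_of_nonneg_right (monotone_sEig hB hik) (sq_nonneg _)
  have hABx : (dotProduct (star (x : n → ℂ)) (A *ᵥ (x : n → ℂ))).re
      ≤ (dotProduct (star (x : n → ℂ)) (B *ᵥ (x : n → ℂ))).re := by
    have h := hAB.dotProduct_mulVec_nonneg (x : n → ℂ)
    have hre := (Complex.le_def.mp h).1
    rw [Matrix.sub_mulVec, dotProduct_sub, Complex.sub_re] at hre
    simp only [Complex.zero_re] at hre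
    linarith
  have := hAx.trans (hABx.trans hBx)
  exact le_of_mul_le_mul_right (by linarith [this]) hxn


lemma lidskii {A B : Matrix n n ℂ} (hA : A.IsHermitian) (hB : B.IsHermitian) :
    ∑ k, |sEig hA k - sEig hB k| ≤ traceNorm (A - B) := by
  have hC : (A - B).IsHermitian := hA.sub hB
  set γ := hC.eigenvalues with hγ
  set U := (hC.eigenvectorUnitary : Matrix n n ℂ) with hU
  have h2U : Uᴴ * U = 1 := by
    simpa [Matrix.star_eq_conjTranspose] using
      (Matrix.mem_unitaryGroup_iff'.mp hC.eigenvectorUnitary.prop)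
  have hspec : A - B = U * Matrix.diagonal (RCLike.ofReal ∘ γ) * Uᴴ := by
    have h := hC.spectral_theorem
    rwa [Unitary.conjStarAlgAut_apply, Matrix.star_eq_conjTranspose] at h
  set Cp := U * Matrix.diagonal (fun i => ((max (γ i) 0 : ℝ) : ℂ)) * Uᴴ with hCp
  set Cm := U * Matrix.diagonal (fun i => ((max (-γ i) 0 : ℝ) : ℂ)) * Uᴴ with hCm
  have hCp_psd : Cp.PosSemidef := Matrix.PosSemidef.mul_mul_conjTranspose_same
    (Matrix.PosSemidef.diagonal (by
      rw [Pi.le_def]; intro i; exact Complex.zero_le_real.mpr (le_max_right _ _))) U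
  have hCm_psd : Cm.PosSemidef := Matrix.PosSemidef.mul_mul_conjTranspose_same
    (Matrix.PosSemidef.diagonal (by
      rw [Pi.le_def]; intro i; exact Complex.zero_le_real.mpr (le_max_right _ _))) U
  have hdsub : ∀ (e e' : n → ℂ), U * Matrix.diagonal e * Uᴴ - U * Matrix.diagonal e' * Uᴴ
      = U * Matrix.diagonal (fun i => e i - e' i) * Uᴴ := by
    intro e e'
    rw [← Matrix.sub_mul, ← Matrix.mul_sub, ← Matrix.diagonal_sub]
  have hsub : Cp - Cm = A - B := by
    have hfun : (fun i => ((max (γ i) 0 : ℝ) : ℂ) - ((max (-γ i) 0 : ℝ) : ℂ))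
        = RCLike.ofReal ∘ γ := by
      funext i
      rw [← Complex.ofReal_sub]
      rcases le_total 0 (γ i) with h | h
      · rw [max_eq_left h, max_eq_right (neg_nonpos.mpr h), sub_zero]; rfl
      · rw [max_eq_right h, max_eq_left (neg_nonneg.mpr h), zero_sub, neg_neg]; rfl
    rw [hCp, hCm, hspec, hdsub, hfun]
  have htrCp : Cp.trace.re = ∑ i, max (γ i) 0 := by
    rw [hCp, Matrix.trace_mul_cycle, h2U, Matrix.one_mul, Matrix.trace_diagonal, Complex.re_sum]
    simp
  have htrCm : Cm.trace.re = ∑ i, max (-γ i) 0 := by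
    rw [hCm, Matrix.trace_mul_cycle, h2U, Matrix.one_mul, Matrix.trace_diagonal, Complex.re_sum]
    simp
  have hCm_eq : Cm = Cp - (A - B) := by rw [← hsub]; abel
  have hP : (B + Cp).IsHermitian := hB.add hCp_psd.1
  have hQ : (A + Cm).IsHermitian := hA.add hCm_psd.1
  have w1 : ∀ k, sEig hA k ≤ sEig hP k := fun k => by
    refine weyl hA hP ?_ k
    have h : (B + Cp) - A = Cm := by rw [hCm_eq]; abel
    rw [h]; exact hCm_psd
  have w2 : ∀ k, sEig hB k ≤ sEig hP k := fun k => by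
    refine weyl hB hP ?_ k
    have h : (B + Cp) - B = Cp := by abel
    rw [h]; exact hCp_psd
  have w3 : ∀ k, sEig hB k ≤ sEig hQ k := fun k => by
    refine weyl hB hQ ?_ k
    have h : (A + Cm) - B = Cp := by rw [hCm_eq]; abel
    rw [h]; exact hCp_psd
  have w4 : ∀ k, sEig hA k ≤ sEig hQ k := fun k => by
    refine weyl hA hQ ?_ k
    have h : (A + Cm) - A = Cm := by abel
    rw [h]; exact hCm_psd
  have hkey : ∀ k, |sEig hA k - sEig hB k|
      ≤ (sEig hP k - sEig hB k) + (sEig hQ k - sEig hA k) := by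
    intro k
    refine abs_sub_le_iff.mpr ⟨?_, ?_⟩
    · have := w1 k; have := w4 k; linarith
    · have := w3 k; have := w2 k; linarith
  have hsums : ∑ k, ((sEig hP k - sEig hB k) + (sEig hQ k - sEig hA k))
      = Cp.trace.re + Cm.trace.re := by
    rw [Finset.sum_add_distrib, Finset.sum_sub_distrib, Finset.sum_sub_distrib,
      sum_sEig, sum_sEig, sum_sEig, sum_sEig,
      sum_eig_eq_trace_re hP, sum_eig_eq_trace_re hQ, sum_eig_eq_trace_re hA,
      sum_eig_eq_trace_re hB, Matrix.trace_add, Matrix.trace_add, Complex.add_re,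
      Complex.add_re]
    ring
  have htn : traceNorm (A - B) = Cp.trace.re + Cm.trace.re := by
    rw [traceNorm_herm hC, htrCp, htrCm, ← Finset.sum_add_distrib]
    refine Finset.sum_congr rfl fun i _ => ?_
    rcases le_total 0 (γ i) with h | h
    · rw [abs_of_nonneg h, max_eq_left h, max_eq_right (neg_nonpos.mpr h), add_zero]
    · rw [abs_of_nonpos h, max_eq_right h, max_eq_left (neg_nonneg.mpr h), zero_add]
  calc ∑ k, |sEig hA k - sEig hB k|
      ≤ ∑ k, ((sEig hP k - sEig hB k) + (sEig hQ k - sEig hA k)) :=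
        Finset.sum_le_sum fun k _ => hkey k
    _ = Cp.trace.re + Cm.trace.re := hsums
    _ = traceNorm (A - B) := htn.symm

lemma exists_unitary_traceNorm {A B : Matrix n n ℂ} (hA : A.IsHermitian) (hB : B.IsHermitian) :
    ∃ v ∈ Matrix.unitaryGroup n ℂ,
      traceNorm (v * A * vᴴ - B) = ∑ k, |sEig hA k - sEig hB k| := by
  set ε := Fintype.equivFin n with hε
  have key : ∀ {C : Matrix n n ℂ} (hC : C.IsHermitian),
      ∃ Vc ∈ Matrix.unitaryGroup n ℂ,
        C = Vc * Matrix.diagonal (fun i => ((sEig hC (ε i) : ℝ) : ℂ)) * Vcᴴ := by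
    intro C hC
    set U := (hC.eigenvectorUnitary : Matrix n n ℂ) with hU
    have hUU : U * Uᴴ = 1 := by
      simpa [Matrix.star_eq_conjTranspose] using
        (Matrix.mem_unitaryGroup_iff.mp hC.eigenvectorUnitary.prop)
    set τ : n ≃ n := ε.trans (pEquiv hC) with hτ
    refine ⟨U.submatrix id τ, ?_, ?_⟩
    · rw [Matrix.mem_unitaryGroup_iff, Matrix.star_eq_conjTranspose,
        Matrix.conjTranspose_submatrix, Matrix.submatrix_mul_equiv, hUU]
      rfl
    · have hspec := hC.spectral_theorem
      rw [Unitary.conjStarAlgAut_apply, Matrix.star_eq_conjTranspose] at hspec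
      have hdiag : Matrix.diagonal (fun i => ((sEig hC (ε i) : ℝ) : ℂ))
          = (Matrix.diagonal (RCLike.ofReal ∘ hC.eigenvalues)).submatrix τ τ := by
        rw [Matrix.submatrix_diagonal _ _ τ.injective]
        rfl
      rw [hdiag, Matrix.conjTranspose_submatrix, Matrix.submatrix_mul_equiv,
        Matrix.submatrix_mul_equiv, Matrix.submatrix_id_id, ← hspec]
  obtain ⟨VA, hVA, hA_eq⟩ := key hA
  obtain ⟨VB, hVB, hB_eq⟩ := key hB
  have hVAH : VAᴴ * VA = 1 := by
    simpa [Matrix.star_eq_conjTranspose] using Matrix.mem_unitaryGroup_iff'.mp hVA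
  refine ⟨VB * VAᴴ, ?_, ?_⟩
  · have hmem : VAᴴ ∈ Matrix.unitaryGroup n ℂ := by
      rw [← Matrix.star_eq_conjTranspose]
      exact Unitary.star_mem hVA
    exact Submonoid.mul_mem _ hVB hmem
  · have hexp : (VB * VAᴴ) * A * (VB * VAᴴ)ᴴ - B
        = VB * Matrix.diagonal (fun i => ((sEig hA (ε i) - sEig hB (ε i) : ℝ) : ℂ)) * VBᴴ := by
      conv_lhs => rw [hA_eq, hB_eq]
      rw [Matrix.conjTranspose_mul, Matrix.conjTranspose_conjTranspose]
      have hmid : VB * VAᴴ * (VA * Matrix.diagonal (fun i => ((sEig hA (ε i) : ℝ) : ℂ)) * VAᴴ)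
          * (VA * VBᴴ)
          = VB * Matrix.diagonal (fun i => ((sEig hA (ε i) : ℝ) : ℂ)) * VBᴴ := by
        simp only [Matrix.mul_assoc]
        rw [← Matrix.mul_assoc VAᴴ VA, hVAH, Matrix.one_mul,
          ← Matrix.mul_assoc VAᴴ VA, hVAH, Matrix.one_mul]
      rw [hmid, ← Matrix.sub_mul, ← Matrix.mul_sub, Matrix.diagonal_sub,
        show (fun i => ((sEig hA (ε i) : ℝ) : ℂ) - ((sEig hB (ε i) : ℝ) : ℂ))
            = fun i => ((sEig hA (ε i) - sEig hB (ε i) : ℝ) : ℂ) from funext fun i => by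
          rw [← Complex.ofReal_sub]]
    rw [hexp, traceNorm_unitary_diag hVB]
    calc ∑ i, |sEig hA (ε i) - sEig hB (ε i)|
        = ∑ k, |sEig hA k - sEig hB k| := Equiv.sum_comp ε fun k => |sEig hA k - sEig hB k|

end TDSOAux

theorem traceNorm_direct_sum_orbit_ge {d m : ℕ}
    (F G : Matrix (Fin d) (Fin d) ℂ) (K : Matrix (Fin m) (Fin m) ℂ)
    (hF : F.IsHermitian) (hG : G.IsHermitian) (hK : K.IsHermitian)
    (u : Matrix (Fin d ⊕ Fin m) (Fin d ⊕ Fin m) ℂ)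
    (hu : u ∈ Matrix.unitaryGroup (Fin d ⊕ Fin m) ℂ) :
    ⨅ v : Matrix.unitaryGroup (Fin d) ℂ,
        traceNorm ((v : Matrix (Fin d) (Fin d) ℂ) * F * (v : Matrix (Fin d) (Fin d) ℂ)ᴴ - G) ≤
      traceNorm (u * Matrix.fromBlocks F 0 0 K * uᴴ - Matrix.fromBlocks G 0 0 K) := by
  classical
  open TDSOAux in
  have hFK : (Matrix.fromBlocks F 0 0 K).IsHermitian := isHermitian_fromBlocks hF hK
  have hGK : (Matrix.fromBlocks G 0 0 K).IsHermitian := isHermitian_fromBlocks hG hK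
  have hA : (u * Matrix.fromBlocks F 0 0 K * uᴴ).IsHermitian := isHermitian_conj hFK
  have hevsA : evs hA = evs hF + evs hK := by
    rw [evs_congr hA hFK (charpoly_unitary_conj hu), evs_fromBlocks hF hK hFK]
  have hevsB : evs hGK = evs hG + evs hK := evs_fromBlocks hG hK hGK
  have hmerge : ∑ k, |sEig hA k - sEig hGK k| = ∑ k, |sEig hF k - sEig hG k| := by
    refine merge_eq (c := sEig hK) (monotone_sEig hF) (monotone_sEig hG) (monotone_sEig hA)
      (monotone_sEig hGK) ?_ ?_
    · rw [tms_sEig, tms_sEig, tms_sEig, hevsA]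
    · rw [tms_sEig, tms_sEig, tms_sEig, hevsB]
  have hkey : ∑ k, |sEig hF k - sEig hG k|
      ≤ traceNorm (u * Matrix.fromBlocks F 0 0 K * uᴴ - Matrix.fromBlocks G 0 0 K) := by
    rw [← hmerge]
    exact lidskii hA hGK
  obtain ⟨v, hv, hveq⟩ := exists_unitary_traceNorm hF hG
  have hbdd : BddBelow (Set.range fun w : Matrix.unitaryGroup (Fin d) ℂ =>
      traceNorm ((w : Matrix (Fin d) (Fin d) ℂ) * F * (w : Matrix (Fin d) (Fin d) ℂ)ᴴ - G)) := by
    refine ⟨0, ?_⟩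
    rintro y ⟨w, rfl⟩
    exact traceNorm_nonneg _
  refine ciInf_le_of_le hbdd ⟨v, hv⟩ ?_
  show traceNorm (v * F * vᴴ - G) ≤ _
  rw [hveq]
  exact hkey
end
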